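/- Let D be a triangle in ℝ² with the origin in its interior, F its gauge, and F_{a,a} = (F_a)_a the twice-associated gauge. Then the unit disk of F_{a,a} is −D, the reflection of D through the origin; equivalently F_{a,a}(x) = F(−x). -/

import Mathlib

open Pointwise

noncomputable section

/-- The determinant form `[x,y] = x₁y₂ − x₂y₁`. -/
def det2 (x y : ℝ × ℝ) : ℝ := x.1 * y.2 - x.2 * y.1

/-- A gauge (convex distance function) on ℝ². -/
def IsGauge (F : ℝ × ℝ → ℝ) : Prop :=
  (∀ x, 0 ≤ F x) ∧ (∀ x, F x = 0 ↔ x = 0) ∧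
  (∀ (l : ℝ) (x : ℝ × ℝ), 0 < l → F (l • x) = l * F x) ∧
  (∀ x y, F (x + y) ≤ F x + F y)

/-- The associated gauge `F_a(x) = sup {[y,x] : F(y) = 1}`. -/
def assocGauge (F : ℝ × ℝ → ℝ) (x : ℝ × ℝ) : ℝ :=
  sSup {d : ℝ | ∃ y, F y = 1 ∧ d = det2 y x}

/-- The gauge (Minkowski functional) of a convex body `D` with `0` in its interior. -/
def gaugeOf (D : Set (ℝ × ℝ)) (x : ℝ × ℝ) : ℝ := sInf {l : ℝ | 0 < l ∧ x ∈ l • D}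

/-!
For a compact convex `D` with `0` in its interior, `F_a(x) = sup_{y ∈ D} [y, x]`: by positive
homogeneity the supremum over the unit circle of `F` equals the one over its unit ball `D`. Since
`[y, x] = ⟪y, (x₂, -x₁)⟫`, this is the support function of `D` at `x` rotated by `-π/2`, so the
unit ball of `F_a` is the polar `{w | ∀ d ∈ D, ⟪d, w⟫ ≤ 1}` rotated by `π/2`. Doing this twice gives
the bipolar of `D`, which is `D` itself by Hahn–Banach separation, rotated by `π`, that is `-D`.
-/

lemma det2_smul_left (l : ℝ) (y x : ℝ × ℝ) : det2 (l • y) x = l * det2 y x := by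
  simp only [det2, Prod.smul_fst, Prod.smul_snd, smul_eq_mul]; ring

lemma det2_smul_right (l : ℝ) (y x : ℝ × ℝ) : det2 y (l • x) = l * det2 y x := by
  simp only [det2, Prod.smul_fst, Prod.smul_snd, smul_eq_mul]; ring

lemma det2_neg_left (y x : ℝ × ℝ) : det2 (-y) x = -det2 y x := by
  simp only [det2, Prod.fst_neg, Prod.snd_neg]; ring

lemma det2_swap_neg (y x : ℝ × ℝ) : det2 y x = det2 (-x) y := by
  simp only [det2, Prod.fst_neg, Prod.snd_neg]; ring

@[simp] lemma det2_zero_left (x : ℝ × ℝ) : det2 0 x = 0 := by simp [det2]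

@[simp] lemma det2_zero_right (y : ℝ × ℝ) : det2 y 0 = 0 := by simp [det2]

lemma det2_rot_pos {x : ℝ × ℝ} (hx : x ≠ 0) : 0 < det2 (x.2, -x.1) x := by
  have : det2 (x.2, -x.1) x = x.1 ^ 2 + x.2 ^ 2 := by simp only [det2]; ring
  rw [this]
  rcases x with ⟨a, b⟩
  have : a ≠ 0 ∨ b ≠ 0 := by
    by_contra! h
    exact hx (by simp [h.1, h.2])
  rcases this with h | h <;> positivity

lemma continuous_det2_left (x : ℝ × ℝ) : Continuous fun y => det2 y x := by
  unfold det2; fun_prop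

lemma exists_det2_eq_clm (f : StrongDual ℝ (ℝ × ℝ)) : ∃ w, ∀ y, det2 y w = f y := by
  refine ⟨(-f (0, 1), f (1, 0)), fun y => ?_⟩
  have hy : y = y.1 • ((1 : ℝ), (0 : ℝ)) + y.2 • ((0 : ℝ), (1 : ℝ)) := by simp
  conv_rhs => rw [hy, map_add, map_smul, map_smul]
  simp only [det2, smul_eq_mul]; ring

section PositivelyHomogeneous

variable {G : ℝ × ℝ → ℝ} (hnn : ∀ y, 0 ≤ G y) (hz : ∀ y, G y = 0 ↔ y = 0)
  (hhom : ∀ (l : ℝ) (y : ℝ × ℝ), 0 < l → G (l • y) = l * G y)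
include hnn hz

lemma apply_pos_of_ne_zero {y : ℝ × ℝ} (hy : y ≠ 0) : 0 < G y :=
  (hnn y).lt_of_ne fun h => hy ((hz y).mp h.symm)

include hhom

lemma map_inv_smul_self {y : ℝ × ℝ} (hy : y ≠ 0) : G ((G y)⁻¹ • y) = 1 := by
  have := apply_pos_of_ne_zero hnn hz hy
  rw [hhom _ _ (inv_pos.mpr this), inv_mul_cancel₀ this.ne']

lemma exists_eq_one_det2_nonneg (x : ℝ × ℝ) : ∃ w, G w = 1 ∧ 0 ≤ det2 w x := by
  have hv : ((1 : ℝ), (0 : ℝ)) ≠ 0 := by simp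
  rcases le_total 0 (det2 (1, 0) x) with h | h
  · refine ⟨_, map_inv_smul_self hnn hz hhom hv, ?_⟩
    rw [det2_smul_left]
    exact mul_nonneg (inv_nonneg.mpr (hnn _)) h
  · refine ⟨_, map_inv_smul_self hnn hz hhom (neg_ne_zero.mpr hv), ?_⟩
    rw [det2_smul_left, det2_neg_left]
    exact mul_nonneg (inv_nonneg.mpr (hnn _)) (neg_nonneg.mpr h)

lemma assocGauge_eq_sSup_ball (x : ℝ × ℝ)
    (hbdd : BddAbove ((det2 · x) '' {y | G y ≤ 1})) :
    assocGauge G x = sSup ((det2 · x) '' {y | G y ≤ 1}) := by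
  have hsub : {d : ℝ | ∃ y, G y = 1 ∧ d = det2 y x} ⊆ (det2 · x) '' {y | G y ≤ 1} :=
    fun _ ⟨y, hy, hd⟩ => ⟨y, hy.le, hd.symm⟩
  obtain ⟨w, hw, hw_nonneg⟩ := exists_eq_one_det2_nonneg hnn hz hhom x
  have hbdd' := hbdd.mono hsub
  refine le_antisymm (csSup_le_csSup hbdd ⟨_, w, hw, rfl⟩ hsub) ?_
  refine csSup_le ⟨0, 0, by simp [(hz 0).mpr rfl]⟩ ?_
  rintro _ ⟨y, hy, rfl⟩
  rcases le_or_gt (det2 y x) 0 with hle | hlt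
  · exact hle.trans (hw_nonneg.trans (le_csSup hbdd' ⟨w, hw, rfl⟩))
  · have hy0 : y ≠ 0 := by rintro rfl; simp at hlt
    have hGy := apply_pos_of_ne_zero hnn hz hy0
    calc det2 y x ≤ (G y)⁻¹ * det2 y x :=
          le_mul_of_one_le_left hlt.le ((one_le_inv₀ hGy).mpr hy)
      _ = det2 ((G y)⁻¹ • y) x := (det2_smul_left _ _ _).symm
      _ ≤ _ := le_csSup hbdd' ⟨_, map_inv_smul_self hnn hz hhom hy0, rfl⟩

end PositivelyHomogeneous

/-- `detSupport D x = sup_{y ∈ D} [y, x]`: the support function of `D` evaluated at `x` rotated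
by `-π/2`. -/
def detSupport (D : Set (ℝ × ℝ)) (x : ℝ × ℝ) : ℝ := sSup ((det2 · x) '' D)

section ConvexBody

variable {D : Set (ℝ × ℝ)}

lemma gaugeOf_eq_gauge : gaugeOf D = gauge D := rfl

lemma gauge_le_one_iff_mem (hconv : Convex ℝ D) (hcl : IsClosed D) (hD0 : D ∈ nhds 0)
    {x : ℝ × ℝ} : gauge D x ≤ 1 ↔ x ∈ D := by
  rw [gauge_le_one_iff_mem_closure hconv hD0, hcl.closure_eq]

lemma gauge_eq_zero_iff (hD : IsCompact D) (hD0 : D ∈ nhds 0) {x : ℝ × ℝ} :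
    gauge D x = 0 ↔ x = 0 :=
  gauge_eq_zero (absorbent_nhds_zero hD0) ((NormedSpace.isVonNBounded_iff ℝ).mpr hD.isBounded)

lemma bddAbove_det2_image (hD : IsCompact D) (x : ℝ × ℝ) : BddAbove ((det2 · x) '' D) :=
  hD.bddAbove_image (continuous_det2_left x).continuousOn

lemma det2_le_detSupport (hD : IsCompact D) {y : ℝ × ℝ} (hy : y ∈ D) (x : ℝ × ℝ) :
    det2 y x ≤ detSupport D x :=
  le_csSup (bddAbove_det2_image hD x) ⟨y, hy, rfl⟩

lemma detSupport_le_iff (hD : IsCompact D) (hne : D.Nonempty) {x : ℝ × ℝ} {c : ℝ} :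
    detSupport D x ≤ c ↔ ∀ y ∈ D, det2 y x ≤ c := by
  rw [detSupport, csSup_le_iff (bddAbove_det2_image hD x) (hne.image _), Set.forall_mem_image]

lemma detSupport_smul {l : ℝ} (hl : 0 ≤ l) (x : ℝ × ℝ) :
    detSupport D (l • x) = l * detSupport D x := by
  have : (det2 · (l • x)) '' D = l • ((det2 · x) '' D) := by
    rw [← Set.image_smul, Set.image_image]
    simp only [det2_smul_right, smul_eq_mul]
  rw [detSupport, this, Real.sSup_smul_of_nonneg hl, smul_eq_mul, detSupport]

lemma detSupport_zero (hne : D.Nonempty) : detSupport D 0 = 0 := by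
  simp only [detSupport, det2_zero_right, hne.image_const, csSup_singleton]

lemma detSupport_pos (hD : IsCompact D) (hD0 : D ∈ nhds 0) {x : ℝ × ℝ} (hx : x ≠ 0) :
    0 < detSupport D x := by
  obtain ⟨b, hb, -, v, hv, hbv⟩ :=
    exists_lt_of_gauge_lt (absorbent_nhds_zero hD0) (lt_add_one (gauge D (x.2, -x.1)))
  have hrot := det2_rot_pos hx
  rw [← hbv, det2_smul_left] at hrot
  exact (pos_of_mul_pos_right hrot hb.le).trans_le (det2_le_detSupport hD hv x)

lemma det2_le_gauge_neg (hD0 : D ∈ nhds 0) {y : ℝ × ℝ} (hy : ∀ d ∈ D, det2 d y ≤ 1)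
    (x : ℝ × ℝ) : det2 y x ≤ gauge D (-x) := by
  refine le_csInf (absorbent_nhds_zero hD0).gauge_set_nonempty ?_
  rintro l ⟨hl, d, hd, hdx⟩
  calc det2 y x = l * det2 d y := by rw [det2_swap_neg, ← hdx, det2_smul_left]
    _ ≤ l := mul_le_of_le_one_right hl.le (hy d hd)

lemma exists_det2_gt_of_notMem (hconv : Convex ℝ D) (hcl : IsClosed D) (h0 : (0 : ℝ × ℝ) ∈ D)
    {z : ℝ × ℝ} (hz : z ∉ D) : ∃ w, (∀ d ∈ D, det2 d w ≤ 1) ∧ 1 < det2 z w := by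
  obtain ⟨f, u, hfD, hfz⟩ := geometric_hahn_banach_closed_point hconv hcl hz
  have hu : 0 < u := by simpa using hfD 0 h0
  obtain ⟨w, hw⟩ := exists_det2_eq_clm (u⁻¹ • f)
  replace hw (d : ℝ × ℝ) : det2 d w = u⁻¹ * f d := hw d
  exact ⟨w, fun d hd => by rw [hw, inv_mul_le_one₀ hu]; exact (hfD d hd).le,
    by rw [hw, one_lt_inv_mul₀ hu]; exact hfz⟩

lemma exists_det2_gt_of_lt_gauge_neg (hconv : Convex ℝ D) (hcl : IsClosed D)
    (h0 : (0 : ℝ × ℝ) ∈ D) {x : ℝ × ℝ} {t : ℝ} (ht : 0 < t) (htx : t < gauge D (-x)) :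
    ∃ w, (∀ d ∈ D, det2 d w ≤ 1) ∧ t < det2 w x := by
  have hz : t⁻¹ • -x ∉ D := fun hz =>
    htx.not_ge (gauge_le_of_mem ht.le ((Set.mem_smul_set_iff_inv_smul_mem₀ ht.ne' D _).mpr hz))
  obtain ⟨w, hwD, hzw⟩ := exists_det2_gt_of_notMem hconv hcl h0 hz
  refine ⟨w, hwD, ?_⟩
  calc t < t * det2 (t⁻¹ • -x) w := lt_mul_of_one_lt_right ht hzw
    _ = det2 w x := by rw [det2_smul_left, mul_inv_cancel_left₀ ht.ne', ← det2_swap_neg]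

variable (hD : IsCompact D) (hconv : Convex ℝ D) (hD0 : D ∈ nhds 0)
include hD hconv hD0

lemma assocGauge_gauge : assocGauge (gauge D) = detSupport D := by
  have hball : {y | gauge D y ≤ 1} = D :=
    Set.ext fun _ => gauge_le_one_iff_mem hconv hD.isClosed hD0
  funext x
  rw [assocGauge_eq_sSup_ball (fun _ => gauge_nonneg _) (fun _ => gauge_eq_zero_iff hD hD0)
    (fun l y hl => by rw [gauge_smul_of_nonneg hl.le, smul_eq_mul]) x
    (by rw [hball]; exact bddAbove_det2_image hD x), hball, detSupport]

lemma assocGauge_detSupport (x : ℝ × ℝ) : assocGauge (detSupport D) x = gauge D (-x) := by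
  have h0 : (0 : ℝ × ℝ) ∈ D := mem_of_mem_nhds hD0
  have hne : D.Nonempty := ⟨0, h0⟩
  have hnn (y : ℝ × ℝ) : 0 ≤ detSupport D y := by
    simpa using det2_le_detSupport hD h0 y
  have hz (y : ℝ × ℝ) : detSupport D y = 0 ↔ y = 0 :=
    ⟨fun h => by_contra fun hy => (detSupport_pos hD hD0 hy).ne' h,
      fun h => h ▸ detSupport_zero hne⟩
  set T := (det2 · x) '' {y | detSupport D y ≤ 1}
  have hT : ∀ d ∈ T, d ≤ gauge D (-x) := by
    rintro _ ⟨y, hy, rfl⟩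
    exact det2_le_gauge_neg hD0 ((detSupport_le_iff hD hne).mp hy) x
  have hTbdd : BddAbove T := ⟨_, hT⟩
  have h0T : (0 : ℝ) ∈ T := ⟨0, by simp [detSupport_zero hne], by simp⟩
  rw [assocGauge_eq_sSup_ball hnn hz (fun l y hl => detSupport_smul hl.le y) x hTbdd]
  refine le_antisymm (csSup_le ⟨0, h0T⟩ hT) (le_of_forall_lt_imp_le_of_dense fun t ht => ?_)
  rcases le_or_gt t 0 with ht0 | ht0
  · exact ht0.trans (le_csSup hTbdd h0T)
  obtain ⟨w, hwD, htw⟩ := exists_det2_gt_of_lt_gauge_neg hconv hD.isClosed h0 ht0 ht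
  exact htw.le.trans (le_csSup hTbdd ⟨w, (detSupport_le_iff hD hne).mpr hwD, rfl⟩)

theorem assocGauge_assocGauge_gauge (x : ℝ × ℝ) :
    assocGauge (assocGauge (gauge D)) x = gauge D (-x) := by
  rw [assocGauge_gauge hD hconv hD0, assocGauge_detSupport hD hconv hD0]

end ConvexBody

theorem triangle_assoc_assoc_unit_disk (p q r : ℝ × ℝ)
    (h0 : (0 : ℝ × ℝ) ∈ interior (convexHull ℝ {p, q, r})) :
    {x : ℝ × ℝ | assocGauge (assocGauge (gaugeOf (convexHull ℝ {p, q, r}))) x ≤ 1} =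
        -(convexHull ℝ {p, q, r} : Set (ℝ × ℝ)) ∧
    ∀ x : ℝ × ℝ, assocGauge (assocGauge (gaugeOf (convexHull ℝ {p, q, r}))) x =
        gaugeOf (convexHull ℝ {p, q, r}) (-x) := by
  set D := convexHull ℝ {p, q, r}
  have hD : IsCompact D := (Set.toFinite _).isCompact_convexHull ℝ
  have hconv : Convex ℝ D := convex_convexHull ℝ _
  have hD0 : D ∈ nhds 0 := mem_interior_iff_mem_nhds.mp h0
  have key := assocGauge_assocGauge_gauge hD hconv hD0
  rw [gaugeOf_eq_gauge]
  refine ⟨Set.ext fun x => ?_, key⟩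
  rw [Set.mem_ofPred_eq, Set.mem_neg, key x]
  exact gauge_le_one_iff_mem hconv hD.isClosed hD0
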